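/- Let C be a 3×3 unitary matrix with entries a^{(i,j)}, e^{iΔ} = det C, and λ ∈ ℝ with e^{iλ} ≠ a^{(2,2)}. Then A(λ) = (a^{(1,1)}e^{iλ} − e^{iΔ} conj(a^{(3,3)}))/(e^{iλ} − a^{(2,2)}), B(λ) = (a^{(1,3)}e^{iλ} + e^{iΔ} conj(a^{(3,1)}))/(e^{iλ} − a^{(2,2)}), C(λ) = (a^{(3,1)}e^{iλ} + e^{iΔ} conj(a^{(1,3)}))/(e^{iλ} − a^{(2,2)}), and D(λ) = (a^{(3,3)}e^{iλ} − e^{iΔ} conj(a^{(1,1)}))/(e^{iλ} − a^{(2,2)}). -/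

import Mathlib

open Complex Matrix ComplexConjugate

noncomputable section

/-- `A(λ)` for a 3×3 coin matrix `M`. -/
def coefA (M : Matrix (Fin 3) (Fin 3) ℂ) (lam : ℝ) : ℂ :=
  M 0 0 + M 0 1 * M 1 0 / (Complex.exp (lam * Complex.I) - M 1 1)

/-- `B(λ)` for a 3×3 coin matrix `M`. -/
def coefB (M : Matrix (Fin 3) (Fin 3) ℂ) (lam : ℝ) : ℂ :=
  M 0 2 + M 0 1 * M 1 2 / (Complex.exp (lam * Complex.I) - M 1 1)

/-- `C(λ)` for a 3×3 coin matrix `M`. -/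
def coefC (M : Matrix (Fin 3) (Fin 3) ℂ) (lam : ℝ) : ℂ :=
  M 2 0 + M 2 1 * M 1 0 / (Complex.exp (lam * Complex.I) - M 1 1)

/-- `D(λ)` for a 3×3 coin matrix `M`. -/
def coefD (M : Matrix (Fin 3) (Fin 3) ℂ) (lam : ℝ) : ℂ :=
  M 2 2 + M 2 1 * M 1 2 / (Complex.exp (lam * Complex.I) - M 1 1)

/-! For a unitary `M`, `adj M = det M • Mᴴ`. Over the common denominator `e^{iλ} - a^{(2,2)}`, the
numerators of `A, B, C, D` are `a^{(i,j)} e^{iλ}` minus the `2×2` minor on rows `{i, 2}` and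
columns `{j, 2}`; up to sign that minor is an entry of `adj M`, i.e. `det M` times the conjugate of
the complementary entry of `M`. -/

theorem add_mul_div_sub_eq {K : Type*} [Field K] {a b c d x : K} (hx : x ≠ d) :
    a + b * c / (x - d) = (a * x - (a * d - b * c)) / (x - d) := by
  field_simp [sub_ne_zero.mpr hx]
  ring

theorem Matrix.adjugate_eq_det_smul_star_of_mem_unitaryGroup {n R : Type*} [Fintype n]
    [DecidableEq n] [CommRing R] [StarRing R] {M : Matrix n n R}
    (hM : M ∈ unitaryGroup n R) : M.adjugate = M.det • star M :=
  calc M.adjugate = star M * M * M.adjugate := by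
        rw [mem_unitaryGroup_iff'.mp hM, one_mul]
    _ = M.det • star M := by
        rw [mul_assoc, mul_adjugate, mul_smul_comm, mul_one]

/-- simplified expressions of `A(λ), B(λ), C(λ), D(λ)` for a
3×3 unitary coin `M`, where `e^{iΔ} = det M`. -/
theorem coef_formulas (M : Matrix (Fin 3) (Fin 3) ℂ)
    (hM : M ∈ Matrix.unitaryGroup (Fin 3) ℂ) (lam : ℝ)
    (hne : Complex.exp (lam * Complex.I) ≠ M 1 1) :
    coefA M lam =
      (M 0 0 * Complex.exp (lam * Complex.I) - M.det * conj (M 2 2)) /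
        (Complex.exp (lam * Complex.I) - M 1 1) ∧
    coefB M lam =
      (M 0 2 * Complex.exp (lam * Complex.I) + M.det * conj (M 2 0)) /
        (Complex.exp (lam * Complex.I) - M 1 1) ∧
    coefC M lam =
      (M 2 0 * Complex.exp (lam * Complex.I) + M.det * conj (M 0 2)) /
        (Complex.exp (lam * Complex.I) - M 1 1) ∧
    coefD M lam =
      (M 2 2 * Complex.exp (lam * Complex.I) - M.det * conj (M 0 0)) /
        (Complex.exp (lam * Complex.I) - M 1 1) := by
  have adjugate_apply (i j : Fin 3) : M.det * conj (M j i) = M.adjugate i j := by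
    simp [Matrix.adjugate_eq_det_smul_star_of_mem_unitaryGroup hM]
  refine ⟨?_, ?_, ?_, ?_⟩
  · rw [coefA, add_mul_div_sub_eq hne, adjugate_apply 2 2, adjugate_fin_three]
    simp
  · rw [coefB, add_mul_div_sub_eq hne, adjugate_apply 0 2, adjugate_fin_three]
    simp
    ring
  · rw [coefC, add_mul_div_sub_eq hne, adjugate_apply 2 0, adjugate_fin_three]
    simp
    ring
  · rw [coefD, add_mul_div_sub_eq hne, adjugate_apply 0 0, adjugate_fin_three]
    simp
    ring
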